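/- arXiv:2310.02023 — 4 statements merged into one kernel-verified Lean document; each statement's English description precedes it below -/
import Mathlib

section
/- Any random variable X taking values in [0, B] (with B > 0) with mean μ = E[X] satisfies, for every real λ, the moment generating function bound E[exp(λX)] ≤ exp((μ/B)(exp(Bλ) − 1)). That is, X is B-sub-Poisson. -/
/-!
On `[0, B]` the convex function `x ↦ exp (l x)` lies below its chord, so
`exp (l X) ≤ 1 + (X / B) (exp (B l) - 1)`. Taking expectations gives
`E[exp (l X)] ≤ 1 + (μ / B) (exp (B l) - 1)`, and `1 + y ≤ exp y` finishes.
-/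

open MeasureTheory ProbabilityTheory Set

lemma Real.exp_mul_le_one_add_of_mem_Icc {x B : ℝ} (hx : x ∈ Icc 0 B) (l : ℝ) :
    Real.exp (l * x) ≤ 1 + x / B * (Real.exp (B * l) - 1) := by
  obtain hB | hB := (hx.1.trans hx.2).eq_or_lt
  · obtain rfl : x = 0 := le_antisymm (hB ▸ hx.2) hx.1
    simp
  have ht0 : 0 ≤ x / B := div_nonneg hx.1 hB.le
  have ht1 : x / B ≤ 1 := (div_le_one hB).mpr hx.2
  have hchord := convexOn_exp.2 (mem_univ 0) (mem_univ (B * l)) (sub_nonneg.2 ht1) ht0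
    (sub_add_cancel 1 (x / B))
  have harg : x / B * (B * l) = l * x := by field_simp
  simp only [smul_eq_mul, mul_zero, zero_add, Real.exp_zero, mul_one, harg] at hchord
  linarith

lemma integral_exp_mul_le_one_add_of_mem_Icc {Ω : Type*} [MeasurableSpace Ω] {P : Measure Ω}
    [IsProbabilityMeasure P] {X : Ω → ℝ} {B : ℝ} (hX : AEMeasurable X P)
    (hbdd : ∀ᵐ ω ∂P, X ω ∈ Icc 0 B) (l : ℝ) :
    ∫ ω, Real.exp (l * X ω) ∂P ≤ 1 + (∫ ω, X ω ∂P) / B * (Real.exp (B * l) - 1) := by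
  have hXint : Integrable X P := .of_mem_Icc 0 B hX hbdd
  have hchordint : Integrable (fun ω ↦ 1 + X ω / B * (Real.exp (B * l) - 1)) P :=
    (integrable_const 1).add ((hXint.div_const B).mul_const _)
  calc ∫ ω, Real.exp (l * X ω) ∂P
      ≤ ∫ ω, 1 + X ω / B * (Real.exp (B * l) - 1) ∂P :=
        integral_mono_ae (integrable_exp_mul_of_mem_Icc hX hbdd) hchordint
          (hbdd.mono fun ω hω ↦ Real.exp_mul_le_one_add_of_mem_Icc hω l)
    _ = 1 + (∫ ω, X ω ∂P) / B * (Real.exp (B * l) - 1) := by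
        rw [integral_add (integrable_const 1) ((hXint.div_const B).mul_const _),
          integral_mul_const, integral_div]
        simp

theorem bounded_is_sub_poisson_general
    {Ω : Type*} [MeasurableSpace Ω] (P : Measure Ω) [IsProbabilityMeasure P]
    (X : Ω → ℝ) (hX : Measurable X)
    (B : ℝ) (hbdd : ∀ ω, X ω ∈ Set.Icc 0 B)
    (μ : ℝ) (hμ : μ = ∫ ω, X ω ∂P) :
    ∀ l : ℝ, ∫ ω, Real.exp (l * X ω) ∂P ≤ Real.exp ((μ / B) * (Real.exp (B * l) - 1)) := by
  intro l
  subst hμ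
  calc ∫ ω, Real.exp (l * X ω) ∂P
      ≤ 1 + (∫ ω, X ω ∂P) / B * (Real.exp (B * l) - 1) :=
        integral_exp_mul_le_one_add_of_mem_Icc hX.aemeasurable (.of_forall hbdd) l
    _ ≤ Real.exp ((∫ ω, X ω ∂P) / B * (Real.exp (B * l) - 1)) := by
        rw [add_comm]
        exact Real.add_one_le_exp _

/-- Any random variable `X` taking values in `[0, B]` (with `B > 0`) with mean
`μ = E[X]` is `B`-sub-Poisson: for every real `λ`,
`E[exp(λ X)] ≤ exp((μ/B) (exp(B λ) − 1))`. -/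
theorem bounded_is_sub_poisson
    {Ω : Type*} [MeasurableSpace Ω] (P : Measure Ω) [IsProbabilityMeasure P]
    (X : Ω → ℝ) (hX : Measurable X)
    (B : ℝ) (hB : 0 < B) (hbdd : ∀ ω, X ω ∈ Set.Icc 0 B)
    (μ : ℝ) (hμ : μ = ∫ ω, X ω ∂P) :
    ∀ l : ℝ, ∫ ω, Real.exp (l * X ω) ∂P ≤ Real.exp ((μ / B) * (Real.exp (B * l) - 1)) :=
  bounded_is_sub_poisson_general P X hX B hbdd μ hμ
end

section
/- Let X be a non-negative random variable with mean μ = E[X] > 0 that is σ-sub-Gaussian, i.e., E[exp(sX)] ≤ exp(sμ + s²σ²/2) for all s ∈ ℝ. Then for every s ≥ 0, E[exp(sX)] ≤ exp((μ²/σ²)(exp(sσ²/μ) − 1)). -/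
/-!
With `x = s σ² / μ` the sub-Gaussian exponent `s μ + s² σ² / 2` equals `(μ² / σ²) (x + x² / 2)`,
and for `x ≥ 0` the truncated series `x + x² / 2` is at most `exp x - 1`.
-/

open MeasureTheory Real

lemma mul_add_sq_mul_sq_div_two_le_mul_exp_sub_one {s μ σ : ℝ} (hs : 0 ≤ s) (hμ : 0 < μ)
    (hσ : σ ≠ 0) :
    s * μ + s ^ 2 * σ ^ 2 / 2 ≤ μ ^ 2 / σ ^ 2 * (exp (s * σ ^ 2 / μ) - 1) := by
  set x := s * σ ^ 2 / μ with hx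
  have hrescale : s * μ + s ^ 2 * σ ^ 2 / 2 = μ ^ 2 / σ ^ 2 * (x + x ^ 2 / 2) := by
    rw [hx]
    field_simp
  have hseries : x + x ^ 2 / 2 ≤ exp x - 1 := by
    linarith [quadratic_le_exp_of_nonneg (show 0 ≤ x by positivity)]
  rw [hrescale]
  gcongr

theorem subgaussian_is_sub_poisson_nonneg_general
    {Ω : Type*} [MeasurableSpace Ω] (P : Measure Ω)
    (X : Ω → ℝ)
    (μ σ : ℝ) (hσ : 0 < σ) (hμpos : 0 < μ)
    (hsubg : ∀ s : ℝ, ∫ ω, Real.exp (s * X ω) ∂P ≤ Real.exp (s * μ + s ^ 2 * σ ^ 2 / 2)) :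
    ∀ s : ℝ, 0 ≤ s →
      ∫ ω, Real.exp (s * X ω) ∂P ≤
        Real.exp ((μ ^ 2 / σ ^ 2) * (Real.exp (s * σ ^ 2 / μ) - 1)) :=
  fun s hs => (hsubg s).trans <| exp_le_exp.2 <|
    mul_add_sq_mul_sq_div_two_le_mul_exp_sub_one hs hμpos hσ.ne'

/-- If `X ≥ 0` has mean `μ = E[X] > 0` and is `σ`-sub-Gaussian, i.e.
`E[exp(s X)] ≤ exp(s μ + s² σ² / 2)` for all real `s`, then for every `s ≥ 0`,
`E[exp(s X)] ≤ exp((μ²/σ²) (exp(s σ²/μ) − 1))`. -/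
theorem subgaussian_is_sub_poisson_nonneg
    {Ω : Type*} [MeasurableSpace Ω] (P : Measure Ω) [IsProbabilityMeasure P]
    (X : Ω → ℝ) (hXnn : ∀ ω, 0 ≤ X ω)
    (μ σ : ℝ) (hσ : 0 < σ) (hμ : μ = ∫ ω, X ω ∂P) (hμpos : 0 < μ)
    (hsubg : ∀ s : ℝ, ∫ ω, Real.exp (s * X ω) ∂P ≤ Real.exp (s * μ + s ^ 2 * σ ^ 2 / 2)) :
    ∀ s : ℝ, 0 ≤ s →
      ∫ ω, Real.exp (s * X ω) ∂P ≤
        Real.exp ((μ ^ 2 / σ ^ 2) * (Real.exp (s * σ ^ 2 / μ) - 1)) :=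
  subgaussian_is_sub_poisson_nonneg_general P X μ σ hσ hμpos hsubg
end

section
/- Let K ⊆ ℝᵈ be a convex set, c ∈ ℝᵈ, and H a positive-definite symmetric d×d matrix such that the ellipsoid {x : (x−c)ᵀH(x−c) ≤ 1} is contained in K and K is contained in {x : (x−c)ᵀH(x−c) ≤ d²}. Suppose θ* ∈ ℝᵈ satisfies ⟨x, θ*⟩ ≥ 0 for all x ∈ K. Then for every x* ∈ K, ⟨c, θ*⟩ ≥ ⟨x*, θ*⟩/(d + 1). -/
/-!
Since the outer ellipsoid is the `d`-fold dilate of the inner one about `c`, reflecting `x*`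
through `c` and shrinking by `d` lands in the inner ellipsoid: `y = c - (x* - c) / d ∈ K`.
Then `0 ≤ ⟨y, θ*⟩ = ⟨c, θ*⟩ - (⟨x*, θ*⟩ - ⟨c, θ*⟩) / d`, which rearranges to the claim.
-/

namespace QuadraticMap

variable {E : Type*} [AddCommGroup E] [Module ℝ E] (Q : QuadraticForm ℝ E)

lemma apply_neg_inv_smul_le_one {v : E} {R : ℝ} (hR : 0 < R) (hv : Q v ≤ R ^ 2) :
    Q (-R⁻¹ • v) ≤ 1 := by
  rw [Q.map_smul, smul_eq_mul, neg_mul_neg]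
  calc R⁻¹ * R⁻¹ * Q v ≤ R⁻¹ * R⁻¹ * R ^ 2 := by gcongr
    _ = 1 := by field_simp

theorem dual_apply_le_mul_apply_center (f : Module.Dual ℝ E) {K : Set E} {c x : E} {R : ℝ}
    (hR : 0 < R) (hinner : {y | Q (y - c) ≤ 1} ⊆ K) (hx : Q (x - c) ≤ R ^ 2)
    (hf : ∀ y ∈ K, 0 ≤ f y) : f x ≤ (R + 1) * f c := by
  have hy : c + -R⁻¹ • (x - c) ∈ K :=
    hinner (by simpa using Q.apply_neg_inv_smul_le_one hR hx)
  have hfy : R⁻¹ * (f x - f c) ≤ f c := by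
    have := hf _ hy
    rw [map_add, map_smul, map_sub, smul_eq_mul] at this
    linarith
  rw [inv_mul_le_iff₀ hR] at hfy
  linarith

end QuadraticMap

lemma Matrix.toQuadraticForm'_apply {R n : Type*} [CommRing R] [Fintype n] [DecidableEq n]
    (H : Matrix n n R) (v : n → R) : H.toQuadraticForm' v = dotProduct v (H.mulVec v) := by
  simp [Matrix.toQuadraticForm', Matrix.toLinearMap₂'_apply']

theorem john_center_reward_bound_general (d : ℕ) (hd : 1 ≤ d)
    (K : Set (Fin d → ℝ))
    (c θstar : Fin d → ℝ) (H : Matrix (Fin d) (Fin d) ℝ)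
    (hinner : {x : Fin d → ℝ | dotProduct (x - c) (H.mulVec (x - c)) ≤ 1} ⊆ K)
    (houter : K ⊆ {x : Fin d → ℝ | dotProduct (x - c) (H.mulVec (x - c)) ≤ (d : ℝ) ^ 2})
    (hθ : ∀ x ∈ K, 0 ≤ dotProduct x θstar)
    (xstar : Fin d → ℝ) (hx : xstar ∈ K) :
    dotProduct xstar θstar / ((d : ℝ) + 1) ≤ dotProduct c θstar := by
  have hd₀ : (0 : ℝ) < d := by exact_mod_cast hd
  rw [div_le_iff₀ (by positivity), mul_comm]
  simp_rw [← H.toQuadraticForm'_apply] at hinner houter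
  exact H.toQuadraticForm'.dual_apply_le_mul_apply_center ((dotProductBilin ℝ ℝ).flip θstar)
    hd₀ hinner (houter hx) hθ

/-- John-ellipsoid reward bound: if the ellipsoid `{x : (x−c)ᵀH(x−c) ≤ 1}` is
contained in a convex set `K`, `K ⊆ {x : (x−c)ᵀH(x−c) ≤ d²}`, and `⟨x, θ*⟩ ≥ 0`
for all `x ∈ K`, then for every `x* ∈ K`, `⟨c, θ*⟩ ≥ ⟨x*, θ*⟩ / (d + 1)`. -/
theorem john_center_reward_bound (d : ℕ) (hd : 1 ≤ d)
    (K : Set (Fin d → ℝ)) (hK : Convex ℝ K)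
    (c θstar : Fin d → ℝ) (H : Matrix (Fin d) (Fin d) ℝ) (hH : H.PosDef)
    (hinner : {x : Fin d → ℝ | dotProduct (x - c) (H.mulVec (x - c)) ≤ 1} ⊆ K)
    (houter : K ⊆ {x : Fin d → ℝ | dotProduct (x - c) (H.mulVec (x - c)) ≤ (d : ℝ) ^ 2})
    (hθ : ∀ x ∈ K, 0 ≤ dotProduct x θstar)
    (xstar : Fin d → ℝ) (hx : xstar ∈ K) :
    dotProduct xstar θstar / ((d : ℝ) + 1) ≤ dotProduct c θstar :=
  john_center_reward_bound_general d hd K c θstar H hinner houter hθ xstar hx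
end

section
/- Let K ⊆ ℝᵈ be convex, c ∈ ℝᵈ, H positive-definite with {x : (x−c)ᵀH(x−c) ≤ 1} ⊆ K, and let x* ∈ K satisfy (x*−c)ᵀH(x*−c) ≤ d². Then the point y = c − (x* − c)/d lies in K. -/
/-!
The reflected point lies already in the inner ellipsoid: scaling `x* − c` by `−1/d` scales the
quadratic form by `1/d²`, bringing it from at most `d²` down to at most `1`.
-/

open Matrix

theorem dotProduct_smul_mulVec_smul {R n : Type*} [CommRing R] [Fintype n]
    (M : Matrix n n R) (a : R) (v : n → R) :
    (a • v) ⬝ᵥ M *ᵥ (a • v) = a ^ 2 * (v ⬝ᵥ M *ᵥ v) := by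
  rw [mulVec_smul, dotProduct_smul, smul_dotProduct, smul_eq_mul, smul_eq_mul]
  ring

theorem dotProduct_inv_smul_mulVec_inv_smul_le_one {n : Type*} [Fintype n]
    (M : Matrix n n ℝ) {t : ℝ} {v : n → ℝ} (hv : v ⬝ᵥ M *ᵥ v ≤ t ^ 2) :
    (t⁻¹ • v) ⬝ᵥ M *ᵥ (t⁻¹ • v) ≤ 1 := by
  rw [dotProduct_smul_mulVec_smul]
  rcases eq_or_ne t 0 with rfl | ht
  · simp
  · calc t⁻¹ ^ 2 * (v ⬝ᵥ M *ᵥ v) ≤ t⁻¹ ^ 2 * t ^ 2 := by gcongr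
      _ = 1 := by field_simp

theorem john_reflected_point_mem_general (d : ℕ)
    (K : Set (Fin d → ℝ))
    (c : Fin d → ℝ) (H : Matrix (Fin d) (Fin d) ℝ)
    (hinner : {x : Fin d → ℝ | dotProduct (x - c) (H.mulVec (x - c)) ≤ 1} ⊆ K)
    (xstar : Fin d → ℝ)
    (hxell : dotProduct (xstar - c) (H.mulVec (xstar - c)) ≤ (d : ℝ) ^ 2) :
    c - ((d : ℝ)⁻¹) • (xstar - c) ∈ K := by
  apply hinner
  have hreflect : c - (d : ℝ)⁻¹ • (xstar - c) - c = (-(d : ℝ))⁻¹ • (xstar - c) := by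
    rw [inv_neg, neg_smul]
    abel
  rw [Set.mem_ofPred_eq, hreflect]
  exact dotProduct_inv_smul_mulVec_inv_smul_le_one H (by rwa [neg_sq])

/-- If the ellipsoid `{x : (x−c)ᵀH(x−c) ≤ 1}` is contained in a convex set `K`
and `x* ∈ K` satisfies `(x*−c)ᵀH(x*−c) ≤ d²`, then `y = c − (x* − c)/d ∈ K`. -/
theorem john_reflected_point_mem (d : ℕ) (hd : 1 ≤ d)
    (K : Set (Fin d → ℝ)) (hK : Convex ℝ K)
    (c : Fin d → ℝ) (H : Matrix (Fin d) (Fin d) ℝ) (hH : H.PosDef)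
    (hinner : {x : Fin d → ℝ | dotProduct (x - c) (H.mulVec (x - c)) ≤ 1} ⊆ K)
    (xstar : Fin d → ℝ) (hx : xstar ∈ K)
    (hxell : dotProduct (xstar - c) (H.mulVec (xstar - c)) ≤ (d : ℝ) ^ 2) :
    c - ((d : ℝ)⁻¹) • (xstar - c) ∈ K :=
  john_reflected_point_mem_general d K c H hinner xstar hxell
end
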